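/- If $X \sim \mathrm{Poisson}(\lambda)$ and $Y \sim \mathrm{Poisson}(\mu)$ are independent with $\lambda > \mu$, then $\mathrm{P}(X > Y) > \mathrm{P}(Y > X)$. -/
import Mathlib


open ProbabilityTheory
open scoped NNReal

private lemma poisson_key_lt {lam mu : ℝ≥0} (hmu : 0 < mu) (hlt : mu < lam)
    {i j : ℕ} (hij : i < j) :
    poissonPMFReal lam i * poissonPMFReal mu j
      < poissonPMFReal lam j * poissonPMFReal mu i := by
  have hmu' : (0:ℝ) < mu := hmu
  have hlam' : (0:ℝ) < lam := lt_trans hmu' hlt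
  unfold poissonPMFReal
  rw [div_mul_div_comm, div_mul_div_comm]
  have hfac : (0:ℝ) < (i.factorial : ℝ) * (j.factorial : ℝ) := by positivity
  rw [mul_comm ((j.factorial:ℝ)) ((i.factorial:ℝ))]
  apply div_lt_div_of_pos_right ?_ hfac
  have key : (mu:ℝ) ^ (j - i) < (lam:ℝ) ^ (j - i) := by
    apply pow_lt_pow_left₀ hlt hmu'.le
    omega
  have h1 : (lam:ℝ) ^ i * (mu:ℝ) ^ j < (lam:ℝ) ^ j * (mu:ℝ) ^ i := by
    have hj : j = i + (j - i) := by omega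
    rw [hj, pow_add, pow_add]
    calc (lam:ℝ) ^ i * ((mu:ℝ) ^ i * (mu:ℝ) ^ (j-i))
        = ((lam:ℝ) ^ i * (mu:ℝ) ^ i) * (mu:ℝ) ^ (j-i) := by ring
      _ < ((lam:ℝ) ^ i * (mu:ℝ) ^ i) * (lam:ℝ) ^ (j-i) := by
          apply mul_lt_mul_of_pos_left key (by positivity)
      _ = (lam:ℝ) ^ i * (lam:ℝ) ^ (j-i) * (mu:ℝ) ^ i := by ring
  calc Real.exp (-lam) * (lam:ℝ) ^ i * (Real.exp (-mu) * (mu:ℝ) ^ j)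
      = (Real.exp (-lam) * Real.exp (-mu)) * ((lam:ℝ) ^ i * (mu:ℝ) ^ j) := by ring
    _ < (Real.exp (-lam) * Real.exp (-mu)) * ((lam:ℝ) ^ j * (mu:ℝ) ^ i) := by
        exact mul_lt_mul_of_pos_left h1 (by positivity)
    _ = Real.exp (-lam) * (lam:ℝ) ^ j * (Real.exp (-mu) * (mu:ℝ) ^ i) := by ring

set_option maxHeartbeats 1000000 in
/-- For independent Poisson variables `X ~ Poisson(λ)`, `Y ~ Poisson(μ)` with
`λ > μ > 0`, one has `P(X > Y) > P(Y > X)`. -/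
theorem poisson_compare_prob (lam mu : ℝ≥0) (hmu : 0 < mu) (hlt : mu < lam) :
    (∑' i : ℕ, ∑' j : ℕ, if i < j then poissonPMFReal lam i * poissonPMFReal mu j else 0)
      < ∑' i : ℕ, ∑' j : ℕ,
          if j < i then poissonPMFReal lam i * poissonPMFReal mu j else 0 := by
  set f : ℕ → ℝ := poissonPMFReal lam with hf
  set g : ℕ → ℝ := poissonPMFReal mu with hg
  have hfs : Summable f := (poissonPMFRealSum lam).summable
  have hgs : Summable g := (poissonPMFRealSum mu).summable
  have hprod : Summable (fun p : ℕ × ℕ => f p.1 * g p.2) :=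
    hfs.mul_of_nonneg hgs (fun _ => poissonPMFReal_nonneg) (fun _ => poissonPMFReal_nonneg)
  have hnn : ∀ p : ℕ × ℕ, (0:ℝ) ≤ f p.1 * g p.2 :=
    fun p => mul_nonneg poissonPMFReal_nonneg poissonPMFReal_nonneg
  set F : ℕ × ℕ → ℝ := fun p => if p.1 < p.2 then f p.1 * g p.2 else 0 with hF
  set G : ℕ × ℕ → ℝ := fun p => if p.2 < p.1 then f p.1 * g p.2 else 0 with hG
  have hFle : ∀ p, F p ≤ f p.1 * g p.2 := by
    intro p; simp only [hF]; split <;> [exact le_rfl; exact hnn p]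
  have hGle : ∀ p, G p ≤ f p.1 * g p.2 := by
    intro p; simp only [hG]; split <;> [exact le_rfl; exact hnn p]
  have hFnn : ∀ p, 0 ≤ F p := by
    intro p; simp only [hF]; split <;> [exact hnn p; exact le_rfl]
  have hGnn : ∀ p, 0 ≤ G p := by
    intro p; simp only [hG]; split <;> [exact hnn p; exact le_rfl]
  have hFs : Summable F := hprod.of_nonneg_of_le hFnn hFle
  have hGs : Summable G := hprod.of_nonneg_of_le hGnn hGle
  have hL : (∑' i : ℕ, ∑' j : ℕ, if i < j then f i * g j else 0) = ∑' p : ℕ × ℕ, F p :=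
    (Summable.tsum_prod' hFs (fun b => hFs.prod_factor b)).symm
  have hR : (∑' i : ℕ, ∑' j : ℕ, if j < i then f i * g j else 0) = ∑' p : ℕ × ℕ, G p :=
    (Summable.tsum_prod' hGs (fun b => hGs.prod_factor b)).symm
  rw [hL, hR]
  have hswap : (∑' p : ℕ × ℕ, G p) = ∑' p : ℕ × ℕ, G (Prod.swap p) :=
    ((Equiv.prodComm ℕ ℕ).tsum_eq G).symm
  rw [hswap]
  have hGswapS : Summable (fun p : ℕ × ℕ => G (Prod.swap p)) :=
    ((Equiv.prodComm ℕ ℕ).summable_iff.mpr hGs)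
  refine Summable.tsum_lt_tsum (f := F) (g := fun p => G (Prod.swap p)) ?_ (i := (0, 1)) ?_ hFs hGswapS
  · intro p
    simp only [hF, hG, Prod.swap, Prod.fst, Prod.snd]
    split
    · exact (poisson_key_lt hmu hlt (by assumption)).le
    · exact le_rfl
  · simp only [hF, hG, Prod.swap]
    norm_num
    exact poisson_key_lt hmu hlt (by norm_num)
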